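/- For every fixed n ≥ 1, setting ϑ_n(x) := (1+x)^{−2n} ∑_{k=0}^∞ C(n+k−1,k)²·(x/(1+x))^{2k} for x ≥ 0, one has inf_{x ≥ 0} ϑ_n(x) = 0. In particular ϑ_1(x) = 1/(1+2x) and ϑ_2(x) = (2x²+2x+1)/(2x+1)³, both of which tend to 0 as x → ∞. -/

import Mathlib

/-
Writing `q = x / (1 + x)`, so that `1 - q = 1 / (1 + x)`, we have
`ϑ_{m+1}(x) = (1 - q)^(2m+2) ∑_k C(m+k,k)² q^(2k)`. Vandermonde gives
`C(m+k,k)² ≤ C(2m+2k,2m)`, and `∑_j C(2m+j,2m) q^j = (1 - q)^(-(2m+1))`, hence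
`0 ≤ ϑ_n(x) ≤ 1 - q = 1 / (1 + x)`, which forces the infimum to be `0`. The closed forms for
`n = 1, 2` come from summing `∑ r^k` and `∑ (k+1)² r^k` at `r = q²`.
-/

open Filter

/-- `ϑ_n(x) = (1+x)^(-2n) ∑_{k=0}^∞ C(n+k-1,k)² (x/(1+x))^(2k)`, the sum of squares of the
fundamental functions of the Baskakov operator. -/
noncomputable def baskakovTheta (n : ℕ) (x : ℝ) : ℝ :=
  (1 / (1 + x) ^ (2 * n)) * ∑' k : ℕ, ((n + k - 1).choose k : ℝ) ^ 2 * (x / (1 + x)) ^ (2 * k)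

open Topology

lemma Nat.choose_sq_le_choose_two_mul (a k : ℕ) : a.choose k ^ 2 ≤ (2 * a).choose (2 * k) := by
  rw [sq, two_mul, two_mul, Nat.add_choose_eq]
  exact Finset.single_le_sum (f := fun ij : ℕ × ℕ => a.choose ij.1 * a.choose ij.2)
    (fun _ _ => Nat.zero_le _) (Finset.HasAntidiagonal.mem_antidiagonal.mpr rfl : (k, k) ∈ _)

lemma tsum_choose_sq_mul_pow_le {q : ℝ} (m : ℕ) (hq0 : 0 ≤ q) (hq1 : q < 1) :
    ∑' k, ((m + k).choose k : ℝ) ^ 2 * q ^ (2 * k) ≤ 1 / (1 - q) ^ (2 * m + 1) := by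
  have hmaj := hasSum_choose_mul_geometric_of_norm_lt_one (2 * m)
    (by rwa [Real.norm_of_nonneg hq0] : ‖q‖ < 1)
  have hinj : Function.Injective (fun k : ℕ => 2 * k) := mul_right_injective₀ two_ne_zero
  have hle : ∀ k, ((m + k).choose k : ℝ) ^ 2 * q ^ (2 * k) ≤
      ((2 * k + 2 * m).choose (2 * m) : ℝ) * q ^ (2 * k) := by
    intro k
    have hchoose := Nat.choose_sq_le_choose_two_mul (m + k) k
    rw [show 2 * (m + k) = 2 * k + 2 * m by ring, Nat.choose_symm_add] at hchoose
    gcongr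
    exact_mod_cast hchoose
  rw [← hmaj.tsum_eq]
  have hsum := (hmaj.summable.comp_injective hinj).of_nonneg_of_le (fun _ => by positivity) hle
  exact hsum.tsum_le_tsum_of_inj _ hinj (fun _ _ => by positivity) hle hmaj.summable

lemma hasSum_sq_succ_mul_geometric {𝕜 : Type*} [NormedField 𝕜] [CompleteSpace 𝕜] {r : 𝕜}
    (hr : ‖r‖ < 1) : HasSum (fun k : ℕ => ((k : 𝕜) + 1) ^ 2 * r ^ k) ((1 + r) / (1 - r) ^ 3) := by
  have h1r : 1 - r ≠ 0 := sub_ne_zero.mpr fun h => by simp [← h] at hr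
  have hsum := ((hasSum_choose_mul_geometric_of_norm_lt_one 2 hr).mul_left 2).sub
    (hasSum_choose_mul_geometric_of_norm_lt_one 1 hr)
  rw [show (1 + r) / (1 - r) ^ 3 = 2 * (1 / (1 - r) ^ (2 + 1)) - 1 / (1 - r) ^ (1 + 1) by
    field_simp; ring]
  refine hsum.congr_fun fun k => ?_
  have hchoose : (k + 2).choose 2 * 2 = (k + 2) * (k + 1) := by
    simpa using (Nat.add_one_mul_choose_eq (k + 1) 1).symm
  replace hchoose := congrArg (Nat.cast : ℕ → 𝕜) hchoose
  rw [Nat.choose_one_right]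
  push_cast at hchoose ⊢
  linear_combination (-r ^ k) * hchoose

lemma one_sub_sq_div_one_add {x : ℝ} (hx : 1 + x ≠ 0) :
    1 - (x / (1 + x)) ^ 2 = (1 + 2 * x) / (1 + x) ^ 2 := by
  field_simp
  ring

lemma sq_div_one_add_lt_one {x : ℝ} (hx : 0 < 1 + 2 * x) : (x / (1 + x)) ^ 2 < 1 := by
  have hx1 : 0 < 1 + x := by linarith
  have h1r := one_sub_sq_div_one_add hx1.ne'
  have := div_pos hx (pow_pos hx1 2)
  linarith

lemma baskakovTheta_nonneg (n : ℕ) (x : ℝ) : 0 ≤ baskakovTheta n x := by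
  unfold baskakovTheta
  exact mul_nonneg (one_div_nonneg.mpr ((even_two_mul n).pow_nonneg _))
    (tsum_nonneg fun k => mul_nonneg (sq_nonneg _) ((even_two_mul k).pow_nonneg _))

lemma baskakovTheta_le_one_div_one_add {n : ℕ} (hn : n ≠ 0) {x : ℝ} (hx : 0 ≤ x) :
    baskakovTheta n x ≤ 1 / (1 + x) := by
  obtain ⟨m, rfl⟩ := Nat.exists_eq_add_one_of_ne_zero hn
  have hx1 : 0 < 1 + x := by linarith
  set q := x / (1 + x)
  have h1q : 1 - q = 1 / (1 + x) := by simp only [q]; field_simp; ring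
  have hq1 : 0 < 1 - q := by rw [h1q]; positivity
  calc baskakovTheta (m + 1) x
      = (1 - q) ^ (2 * (m + 1)) * ∑' k, ((m + k).choose k : ℝ) ^ 2 * q ^ (2 * k) := by
        rw [h1q, one_div_pow]
        simp only [baskakovTheta, add_right_comm m 1, Nat.add_sub_cancel, q]
    _ ≤ (1 - q) ^ (2 * (m + 1)) * (1 / (1 - q) ^ (2 * m + 1)) := by
        gcongr
        exact tsum_choose_sq_mul_pow_le m (by positivity) (by linarith)
    _ = 1 / (1 + x) := by rw [← h1q]; field_simp; ring

lemma tendsto_baskakovTheta_atTop {n : ℕ} (hn : n ≠ 0) :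
    Tendsto (baskakovTheta n) atTop (𝓝 0) := by
  refine squeeze_zero' (.of_forall (baskakovTheta_nonneg n))
    ((eventually_ge_atTop 0).mono fun x hx => baskakovTheta_le_one_div_one_add hn hx) ?_
  simp only [one_div]
  exact (tendsto_atTop_add_const_left _ 1 tendsto_id).inv_tendsto_atTop

lemma sInf_baskakovTheta {n : ℕ} (hn : n ≠ 0) :
    sInf {y : ℝ | ∃ x : ℝ, 0 ≤ x ∧ y = baskakovTheta n x} = 0 := by
  have hlb : ∀ y ∈ {y : ℝ | ∃ x : ℝ, 0 ≤ x ∧ y = baskakovTheta n x}, 0 ≤ y := by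
    rintro _ ⟨x, -, rfl⟩
    exact baskakovTheta_nonneg n x
  refine le_antisymm ?_ (le_csInf ⟨_, 0, le_rfl, rfl⟩ hlb)
  exact ge_of_tendsto (tendsto_baskakovTheta_atTop hn)
    ((eventually_ge_atTop 0).mono fun x hx => csInf_le ⟨0, hlb⟩ ⟨x, hx, rfl⟩)

lemma baskakovTheta_eq_of_hasSum {n : ℕ} {x s : ℝ}
    (h : HasSum (fun k => ((n + k - 1).choose k : ℝ) ^ 2 * ((x / (1 + x)) ^ 2) ^ k) s) :
    baskakovTheta n x = s / (1 + x) ^ (2 * n) := by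
  simp only [baskakovTheta, pow_mul, h.tsum_eq]
  ring

lemma baskakovTheta_one {x : ℝ} (hx : 0 < 1 + 2 * x) : baskakovTheta 1 x = 1 / (1 + 2 * x) := by
  have hx1 : 1 + x ≠ 0 := by linarith
  have hsum := hasSum_geometric_of_lt_one (sq_nonneg _) (sq_div_one_add_lt_one hx)
  rw [baskakovTheta_eq_of_hasSum (by simpa using hsum), one_sub_sq_div_one_add hx1]
  field_simp

lemma baskakovTheta_two {x : ℝ} (hx : 0 < 1 + 2 * x) :
    baskakovTheta 2 x = (2 * x ^ 2 + 2 * x + 1) / (2 * x + 1) ^ 3 := by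
  have hx1 : 1 + x ≠ 0 := by linarith
  have hr : ‖(x / (1 + x)) ^ 2‖ < 1 := by
    rw [Real.norm_of_nonneg (sq_nonneg _)]
    exact sq_div_one_add_lt_one hx
  have hchoose (k : ℕ) : ((2 + k - 1).choose k : ℝ) = k + 1 := by
    rw [show 2 + k - 1 = k + 1 by omega, Nat.choose_succ_self_right]
    push_cast
    rfl
  rw [baskakovTheta_eq_of_hasSum ((hasSum_sq_succ_mul_geometric hr).congr_fun fun k => by
      rw [hchoose]),
    one_sub_sq_div_one_add hx1]
  field_simp
  ring

theorem baskakovTheta_inf_zero (n : ℕ) (hn : 1 ≤ n) :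
    sInf {y : ℝ | ∃ x : ℝ, 0 ≤ x ∧ y = baskakovTheta n x} = 0 ∧
    (∀ x : ℝ, 0 ≤ x → baskakovTheta 1 x = 1 / (1 + 2 * x)) ∧
    (∀ x : ℝ, 0 ≤ x → baskakovTheta 2 x = (2 * x ^ 2 + 2 * x + 1) / (2 * x + 1) ^ 3) ∧
    Tendsto (fun x => baskakovTheta 1 x) atTop (nhds 0) ∧
    Tendsto (fun x => baskakovTheta 2 x) atTop (nhds 0) :=
  ⟨sInf_baskakovTheta (by omega), fun _ hx => baskakovTheta_one (by linarith),
    fun _ hx => baskakovTheta_two (by linarith), tendsto_baskakovTheta_atTop one_ne_zero,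
    tendsto_baskakovTheta_atTop two_ne_zero⟩
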